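/- Let X be a proper Hadamard space, r > 0, x, y ∈ X, A, B ⊂ ∂X, and set K⁺ = K_r^+(x,A), K⁻ = K_r^-(y,B). Then for all γ ∈ Is(X) with d(x,γy) ≥ 3r, the endpoint map satisfies ∂_∞(⋃_{t>0} (K⁺ ∩ g^{−t} γK⁻)) = L_r(x,γy) ∩ ∂_∞𝒵 ∩ (γB × A). -/

import Mathlib

open Metric MeasureTheory Filter Topology Set
open scoped ENNReal NNReal

noncomputable section

namespace RicksBM

variable {X : Type*} [MetricSpace X]

/-- `σ` is a unit speed geodesic ray (only values at nonnegative times matter). -/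
def IsRay (σ : ℝ → X) : Prop :=
  ∀ s t : ℝ, 0 ≤ s → 0 ≤ t → dist (σ s) (σ t) = |s - t|

/-- Two geodesic rays are asymptotic if they stay at bounded distance. -/
def RaysAsymptotic (σ τ : ℝ → X) : Prop :=
  ∃ C : ℝ, ∀ t : ℝ, 0 ≤ t → dist (σ t) (τ t) ≤ C

/-- The type of unit speed geodesic rays. -/
abbrev Ray (X : Type*) [MetricSpace X] : Type _ := {σ : ℝ → X // IsRay σ}

/-- The space `𝒢` of parametrized geodesic lines, topologized as a subspace of
`C(ℝ, X)` with the compact-open topology. -/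
abbrev GeodLine (X : Type*) [MetricSpace X] : Type _ := {v : C(ℝ, X) // Isometry v}

instance : MeasurableSpace (GeodLine X) := borel _

/-- The geodesic flow on the space of parametrized geodesic lines. -/
def geodFlow (t : ℝ) (v : GeodLine X) : GeodLine X :=
  ⟨⟨fun s => v.1 (s + t), v.1.continuous.comp (by fun_prop)⟩,
    v.2.comp (Isometry.of_dist_eq fun a b => dist_add_right a b t)⟩

/-- Isometries of `X` act on geodesic lines. -/
instance : SMul (X ≃ᵢ X) (GeodLine X) :=
  ⟨fun γ v => ⟨⟨fun t => γ (v.1 t), γ.continuous.comp v.1.continuous⟩, γ.isometry.comp v.2⟩⟩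

instance : MulAction (X ≃ᵢ X) (GeodLine X) where
  one_smul v := Subtype.ext (ContinuousMap.ext fun t => rfl)
  mul_smul γ₁ γ₂ v := Subtype.ext (ContinuousMap.ext fun t => rfl)

/-- `X` is a Hadamard space: complete, geodesic and satisfying the CAT(0)
comparison inequality. -/
structure IsHadamard (X : Type*) [MetricSpace X] : Prop where
  complete : CompleteSpace X
  geodesic : ∀ x y : X, ∃ σ : ℝ → X,
    σ 0 = x ∧ σ (dist x y) = y ∧
    ∀ s ∈ Icc (0:ℝ) (dist x y), ∀ t ∈ Icc (0:ℝ) (dist x y), dist (σ s) (σ t) = |s - t|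
  cat0 : ∀ (x y p : X) (σ : ℝ → X),
    σ 0 = x → σ (dist x y) = y →
    (∀ s ∈ Icc (0:ℝ) (dist x y), ∀ t ∈ Icc (0:ℝ) (dist x y), dist (σ s) (σ t) = |s - t|) →
    ∀ t ∈ Icc (0:ℝ) 1,
      dist p (σ (t * dist x y)) ^ 2
        ≤ (1 - t) * dist p x ^ 2 + t * dist p y ^ 2 - t * (1 - t) * dist x y ^ 2

/-- `X` is geodesically complete: any geodesic segment extends to a full
geodesic line. -/
def GeodesicallyComplete (X : Type*) [MetricSpace X] : Prop :=
  ∀ x y : X, x ≠ y → ∃ (v : GeodLine X) (t : ℝ), v.1 t = x ∧ v.1 (t + dist x y) = y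

/-- The geometric compactification `X̄ = X ∪ ∂X` of a Hadamard space, together
with the assignment of endpoints at infinity to geodesic rays and the Busemann
functions. -/
structure BoundaryData (X : Type*) [MetricSpace X] where
  /-- the compactification `X̄` -/
  Xbar : Type*
  topXbar : TopologicalSpace Xbar
  /-- the inclusion `X → X̄` -/
  incl : X → Xbar
  isOpenEmbedding : Topology.IsOpenEmbedding incl
  denseRange : DenseRange incl
  compactSpace : CompactSpace Xbar
  t2 : T2Space Xbar
  /-- the endpoint at infinity of a geodesic ray -/
  endOfRay : Ray X → Xbar
  endOfRay_notMem : ∀ σ : Ray X, endOfRay σ ∉ Set.range incl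
  endOfRay_tendsto : ∀ σ : Ray X, Tendsto (fun t => incl (σ.1 t)) atTop (𝓝 (endOfRay σ))
  endOfRay_eq_iff : ∀ σ τ : Ray X, (endOfRay σ = endOfRay τ ↔ RaysAsymptotic σ.1 τ.1)
  ray_exists : ∀ p : Xbar, p ∉ Set.range incl → ∀ x : X,
    ∃ σ : Ray X, σ.1 0 = x ∧ endOfRay σ = p
  /-- the Busemann function `B_ξ(x,y)`, for `ξ` a boundary point -/
  busemann : Xbar → X → X → ℝ
  busemann_spec : ∀ (σ : Ray X) (x y : X),
    Tendsto (fun s => dist x (σ.1 s) - dist y (σ.1 s)) atTop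
      (𝓝 (busemann (endOfRay σ) x y))

attribute [instance] BoundaryData.topXbar

variable (D : BoundaryData X)

/-- The geometric boundary `∂X`. -/
abbrev BoundaryData.bdry : Type _ := {p : D.Xbar // p ∉ Set.range D.incl}

noncomputable instance (D : BoundaryData X) : MeasurableSpace D.Xbar := borel _

/-- Endpoint of a ray, as a boundary point. -/
def BoundaryData.endB (σ : Ray X) : D.bdry := ⟨D.endOfRay σ, D.endOfRay_notMem σ⟩

/-- The positive endpoint `v⁺` of a geodesic line. -/
def linePlus (v : GeodLine X) : D.bdry :=
  D.endB ⟨fun t => v.1 t, fun s t _ _ => by rw [v.2.dist_eq, Real.dist_eq]⟩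

/-- The negative endpoint `v⁻` of a geodesic line. -/
def lineMinus (v : GeodLine X) : D.bdry :=
  D.endB ⟨fun t => v.1 (-t), fun s t _ _ => by
    rw [v.2.dist_eq, Real.dist_eq, show -s - -t = t - s by ring, abs_sub_comm]⟩

/-- The pair of endpoints `∂_∞ v = (v⁻, v⁺)` of a geodesic line. -/
def ends (v : GeodLine X) : D.bdry × D.bdry := (lineMinus D v, linePlus D v)

open Classical in
/-- The extension of an isometry of `X` to the geometric boundary. -/
def BoundaryData.act (γ : X ≃ᵢ X) (ξ : D.bdry) : D.bdry :=
  if h : Nonempty X then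
    D.endB ⟨fun t => γ (((D.ray_exists ξ.1 ξ.2 h.some).choose).1 t),
      fun s t hs ht => by
        rw [γ.isometry.dist_eq]
        exact ((D.ray_exists ξ.1 ξ.2 h.some).choose).2 s t hs ht⟩
  else ξ

/-- The width of a geodesic line: the diameter of the set of origins of the
parallel lines with the same endpoints. -/
def width (v : GeodLine X) : ℝ≥0∞ :=
  EMetric.diam {p : X | ∃ u : GeodLine X,
    lineMinus D u = lineMinus D v ∧ linePlus D u = linePlus D v ∧
    D.busemann (lineMinus D v).1 (u.1 0) (v.1 0) = 0 ∧ u.1 0 = p}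

/-- The set of pairs of boundary points joined by a geodesic line. -/
def endpointsAll : Set (D.bdry × D.bdry) :=
  {q | ∃ v : GeodLine X, ends D v = q}

/-- `∂_∞ℛ` : pairs of boundary points joined by a rank one (finite width) line. -/
def endpointsR : Set (D.bdry × D.bdry) :=
  {q | ∃ v : GeodLine X, width D v ≠ ⊤ ∧ ends D v = q}

/-- `∂_∞𝒵` : pairs of boundary points joined by a zero width line. -/
def endpointsZ : Set (D.bdry × D.bdry) :=
  {q | ∃ v : GeodLine X, width D v = 0 ∧ ends D v = q}

/-- The union `(ξη)` of all geodesic lines joining `ξ` to `η`. -/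
def joinSet (ξ η : D.bdry) : Set X :=
  {p | ∃ (v : GeodLine X) (t : ℝ), lineMinus D v = ξ ∧ linePlus D v = η ∧ v.1 t = p}

/-- A geodesic line is `Is(X)`-recurrent. -/
def IsomRecurrent (v : GeodLine X) : Prop :=
  ∃ (g : ℕ → X ≃ᵢ X) (t : ℕ → ℝ), Tendsto t atTop atTop ∧
    Tendsto (fun n => g n • geodFlow (t n) v) atTop (𝓝 v)

/-- A geodesic line is `Γ`-recurrent. -/
def GammaRecurrent (Γ : Subgroup (X ≃ᵢ X)) (v : GeodLine X) : Prop :=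
  ∃ (g : ℕ → Γ) (t : ℕ → ℝ), Tendsto t atTop atTop ∧
    Tendsto (fun n => (g n : X ≃ᵢ X) • geodFlow (t n) v) atTop (𝓝 v)

/-- `∂X^rec`: endpoints of `Is(X)`-recurrent zero width geodesic lines. -/
def recBoundary : Set D.bdry :=
  {η | ∃ v : GeodLine X, width D v = 0 ∧ IsomRecurrent v ∧ linePlus D v = η}
/-- `Γ` is a discrete subgroup of the isometry group: orbits meet balls in
finite sets. -/
def IsDiscreteSubgroup (Γ : Subgroup (X ≃ᵢ X)) : Prop :=
  ∀ (x : X) (R : ℝ), {γ : Γ | dist x ((γ : X ≃ᵢ X) x) ≤ R}.Finite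

/-- The limit set `L_Γ = closure(Γ z) ∩ ∂X` (independent of the basepoint `z`). -/
def limitSet (Γ : Subgroup (X ≃ᵢ X)) (z : X) : Set D.bdry :=
  {ξ | ξ.1 ∈ closure (Set.range fun γ : Γ => D.incl ((γ : X ≃ᵢ X) z))}

/-- The radial limit set of `Γ` (independent of the basepoints `x`, `y`). -/
def radialLimitSet (Γ : Subgroup (X ≃ᵢ X)) (x y : X) : Set D.bdry :=
  {ξ | ∃ c : ℝ, 0 < c ∧ ∃ σ : Ray X, σ.1 0 = x ∧ D.endB σ = ξ ∧
    ∃ (γ : ℕ → Γ) (t : ℕ → ℝ), Tendsto t atTop atTop ∧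
      ∀ n, dist ((γ n : X ≃ᵢ X) y) (σ.1 (t n)) ≤ c}

/-- The critical exponent `δ_Γ` of the Poincaré series (independent of `x`, `y`). -/
def critExp (Γ : Subgroup (X ≃ᵢ X)) (x y : X) : ℝ :=
  sInf {s : ℝ | 0 < s ∧ Summable fun γ : Γ => Real.exp (-s * dist x ((γ : X ≃ᵢ X) y))}

/-- `Γ` is divergent: the Poincaré series diverges at the critical exponent. -/
def IsDivergent (Γ : Subgroup (X ≃ᵢ X)) (x y : X) : Prop :=
  ¬ Summable fun γ : Γ => Real.exp (-(critExp Γ x y) * dist x ((γ : X ≃ᵢ X) y))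

/-- `γ` is axial with translation length `ℓ` and invariant geodesic `v`. -/
def IsAxialWith (γ : X ≃ᵢ X) (ℓ : ℝ) (v : GeodLine X) : Prop :=
  0 < ℓ ∧ γ • v = geodFlow ℓ v

/-- The length spectrum of `Γ`: translation lengths of axial elements. -/
def lengthSpectrum (Γ : Subgroup (X ≃ᵢ X)) : Set ℝ :=
  {ℓ | ∃ γ ∈ Γ, ∃ v : GeodLine X, IsAxialWith γ ℓ v}

/-- The length spectrum is arithmetic: it generates a discrete (hence cyclic)
subgroup of `ℝ`. -/
def HasArithmeticLengthSpectrum (Γ : Subgroup (X ≃ᵢ X)) : Prop :=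
  ∃ a : ℝ, ∀ ℓ ∈ lengthSpectrum Γ, ∃ n : ℤ, ℓ = n * a

/-- `γ` is a rank one isometry: axial, with all invariant geodesics of finite
width. -/
def IsRankOneIsom (γ : X ≃ᵢ X) : Prop :=
  ∃ ℓ : ℝ, 0 < ℓ ∧ (∃ v : GeodLine X, γ • v = geodFlow ℓ v) ∧
    ∀ v : GeodLine X, γ • v = geodFlow ℓ v → width D v ≠ ⊤

/-- `Γ` is a rank one group: it contains two rank one isometries with disjoint
fixed point sets in the boundary. -/
def IsRankOneGroup (Γ : Subgroup (X ≃ᵢ X)) : Prop :=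
  ∃ g h : X ≃ᵢ X, g ∈ Γ ∧ h ∈ Γ ∧ IsRankOneIsom D g ∧ IsRankOneIsom D h ∧
    Disjoint {ξ : D.bdry | D.act g ξ = ξ} {ξ : D.bdry | D.act h ξ = ξ}

/-- `𝒵_Γ ≠ ∅` : there is a zero width geodesic with both endpoints in the
limit set. -/
def ZGammaNonempty (Γ : Subgroup (X ≃ᵢ X)) (z : X) : Prop :=
  ∃ v : GeodLine X, width D v = 0 ∧
    lineMinus D v ∈ limitSet D Γ z ∧ linePlus D v ∈ limitSet D Γ z

open Classical in
/-- The Gromov product `Gr_y(ξ,η)` of two boundary points joined by a geodesic. -/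
def gromov (y : X) (ξ η : D.bdry) : ℝ :=
  if h : (joinSet D ξ η).Nonempty then
    (D.busemann ξ.1 y h.choose + D.busemann η.1 y h.choose) / 2
  else 0

/-- The density `e^{2 δ Gr_x(ξ,η)} 1_{∂_∞ℛ}(ξ,η)` of the Bowen–Margulis
geodesic current with respect to `μ_x ⊗ μ_x`. -/
def bmDensity (δ : ℝ) (x : X) : D.bdry × D.bdry → ℝ≥0∞ :=
  (endpointsR D).indicator fun q => ENNReal.ofReal (Real.exp (2 * δ * gromov D x q.1 q.2))

/-- `(μ_x)` is a `δ`-dimensional `Γ`-invariant conformal density (with limit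
set taken with respect to the basepoint `z`). -/
def IsConformalDensity (Γ : Subgroup (X ≃ᵢ X)) (δ : ℝ) (μ : X → Measure D.bdry)
    (z : X) : Prop :=
  (∀ x : X, IsFiniteMeasure (μ x)) ∧ (∀ x : X, μ x ≠ 0) ∧
  (∀ x : X, μ x ((limitSet D Γ z)ᶜ) = 0) ∧
  (∀ γ : X ≃ᵢ X, γ ∈ Γ → ∀ x : X, ∀ E : Set D.bdry, MeasurableSet E →
      μ (γ x) E = μ x (D.act γ ⁻¹' E)) ∧
  (∀ x y : X, μ x = (μ y).withDensity
      fun η => ENNReal.ofReal (Real.exp (δ * D.busemann η.1 y x)))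

/-- The set of origins of the zero width lines in `E` with endpoint pair `q`. -/
def originSet (E : Set (GeodLine X)) (q : D.bdry × D.bdry) : Set X :=
  {p | ∃ v ∈ E, width D v = 0 ∧ ends D v = q ∧ v.1 0 = p}

/-- `m` is the Ricks measure on `𝒢` associated to the geodesic current `μbar`:
`m(E) = ∫ λ(p(E ∩ 𝒵 ∩ ∂_∞⁻¹(ξ,η))) dμbar(ξ,η)`, the fibrewise length measure
being one-dimensional Hausdorff measure. -/
def IsRicksMeasure [MeasurableSpace X] [BorelSpace X]
    (μbar : Measure (D.bdry × D.bdry)) (m : Measure (GeodLine X)) : Prop :=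
  ∀ E : Set (GeodLine X), MeasurableSet E →
    m E = ∫⁻ q, μH[1] (originSet D E q) ∂μbar

/-- The quotient `Γ\𝒢`. -/
abbrev lineQuot (Γ : Subgroup (X ≃ᵢ X)) : Type _ :=
  Quotient (MulAction.orbitRel Γ (GeodLine X))

/-- The geodesic flow on the quotient `Γ\𝒢`. -/
def flowQuot (Γ : Subgroup (X ≃ᵢ X)) (t : ℝ) : lineQuot Γ → lineQuot Γ :=
  Quotient.map' (geodFlow t) (fun a b hab => by
    obtain ⟨γ, hγ⟩ := hab
    exact ⟨γ, by rw [← hγ]; exact Subtype.ext (ContinuousMap.ext fun s => rfl)⟩)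

/-- `mΓ` is the measure on `Γ\𝒢` obtained as the quotient of the `Γ`-invariant
measure `m` on `𝒢`. -/
def IsQuotientMeasure (Γ : Subgroup (X ≃ᵢ X)) (m : Measure (GeodLine X))
    (mΓ : Measure (lineQuot Γ)) : Prop :=
  ∀ A₀ : Set (GeodLine X), MeasurableSet A₀ →
    Set.InjOn (Quotient.mk (MulAction.orbitRel Γ (GeodLine X))) A₀ →
    mΓ (Quotient.mk (MulAction.orbitRel Γ (GeodLine X)) '' A₀) = m A₀

/-- Mixing of the geodesic flow on `Γ\𝒢` with respect to `mΓ`: for Borel sets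
of finite measure, `mΓ(A ∩ g^{-t}B)` converges, as `t → ±∞`, to
`mΓ(A)·mΓ(B)/‖mΓ‖` (which is `0` when `mΓ` is infinite). -/
def IsMixing (Γ : Subgroup (X ≃ᵢ X)) (mΓ : Measure (lineQuot Γ)) : Prop :=
  ∀ A B : Set (lineQuot Γ), MeasurableSet A → MeasurableSet B →
    mΓ A ≠ ⊤ → mΓ B ≠ ⊤ →
    Tendsto (fun t : ℝ => mΓ (A ∩ flowQuot Γ t ⁻¹' B)) atTop
      (𝓝 (mΓ A * mΓ B / mΓ Set.univ)) ∧
    Tendsto (fun t : ℝ => mΓ (A ∩ flowQuot Γ t ⁻¹' B)) atBot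
      (𝓝 (mΓ A * mΓ B / mΓ Set.univ))
/-- The rays from the point `z` to the boundary point `η`. -/
def raysFromTo (z : X) (η : D.bdry) : Set (ℝ → X) :=
  {σ | ∃ hσ : IsRay σ, σ 0 = z ∧ D.endB ⟨σ, hσ⟩ = η}

/-- The shadow `O_r(ξ, x)` of the ball `B_r(x)` seen from the boundary point `ξ`. -/
def shadow (r : ℝ) (ξ : D.bdry) (x : X) : Set D.bdry :=
  {η | (ξ, η) ∈ endpointsAll D ∧ Metric.infDist x (joinSet D ξ η) < r}

/-- The set `∂̃O_r(ξ,x)` of boundary points joined to `ξ` at distance exactly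
`r` from `x`. -/
def shadowTildeBoundary (r : ℝ) (ξ : D.bdry) (x : X) : Set D.bdry :=
  {η | (ξ, η) ∈ endpointsAll D ∧ Metric.infDist x (joinSet D ξ η) = r}

/-- The large shadow `O_r^+(x, y)`. -/
def largeShadow (r : ℝ) (x y : X) : Set D.bdry :=
  {η | ∃ z ∈ Metric.ball x r, ∃ σ ∈ raysFromTo D z η, ∃ t : ℝ, 0 ≤ t ∧ σ t ∈ Metric.ball y r}

/-- The small shadow `O_r^-(x, y)`. -/
def smallShadow (r : ℝ) (x y : X) : Set D.bdry :=
  {η | ∀ z ∈ Metric.ball x r, ∃ σ ∈ raysFromTo D z η, ∃ t : ℝ, 0 ≤ t ∧ σ t ∈ Metric.ball y r}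

open Classical in
/-- The large shadow with source a point of `X̄` (with the convention
`O_r^±(ξ,x) = O_r(ξ,x)` for boundary sources). -/
def largeShadowBar (r : ℝ) (z : D.Xbar) (x : X) : Set D.bdry :=
  if h : z ∈ Set.range D.incl then largeShadow D r h.choose x
  else shadow D r ⟨z, h⟩ x

open Classical in
/-- The small shadow with source a point of `X̄` (with the convention
`O_r^±(ξ,x) = O_r(ξ,x)` for boundary sources). -/
def smallShadowBar (r : ℝ) (z : D.Xbar) (x : X) : Set D.bdry :=
  if h : z ∈ Set.range D.incl then smallShadow D r h.choose x
  else shadow D r ⟨z, h⟩ x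

/-- The small cone `C_r^-(x, A)`. -/
def smallCone (r : ℝ) (x : X) (A : Set D.bdry) : Set X :=
  {z | largeShadow D r x z ⊆ A}

/-- The large cone `C_r^+(x, A)`. -/
def largeCone (r : ℝ) (x : X) (A : Set D.bdry) : Set X :=
  {z | (largeShadow D r x z ∩ A).Nonempty}

/-- The corridor `L_r(x, y)`. -/
def corridor (r : ℝ) (x y : X) : Set (D.bdry × D.bdry) :=
  {q | ∃ (v : GeodLine X) (t : ℝ), ends D v = q ∧ 0 < t ∧
    v.1 0 ∈ Metric.ball x r ∧ v.1 t ∈ Metric.ball y r}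

/-- The set `K_r(z) = {g^s v(z;ξ,η) : (ξ,η) ∈ ∂_∞𝒵, d(z,(ξη)) < r,
s ∈ (-r/2, r/2)}`. -/
def Kset (r : ℝ) (z : X) : Set (GeodLine X) :=
  {w | width D w = 0 ∧
    Metric.infDist z (joinSet D (lineMinus D w) (linePlus D w)) < r ∧
    ∃ s : ℝ, |s| < r / 2 ∧
      dist z (w.1 (-s)) = Metric.infDist z (joinSet D (lineMinus D w) (linePlus D w))}

/-- `K_r^+(x, A)`. -/
def KsetPlus (r : ℝ) (x : X) (A : Set D.bdry) : Set (GeodLine X) :=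
  {w ∈ Kset D r x | linePlus D w ∈ A}

/-- `K_r^-(y, B)`. -/
def KsetMinus (r : ℝ) (y : X) (B : Set D.bdry) : Set (GeodLine X) :=
  {w ∈ Kset D r y | lineMinus D w ∈ B}

open Classical in
/-- The orbital measures `ν_{x,y}^T = δ_Γ e^{-δ_Γ T} Σ_{γ ∈ Γ, d(x,γy) ≤ T}
D_{γ y} ⊗ D_{γ^{-1} x}` on `X̄ × X̄`. -/
def nuT (Γ : Subgroup (X ≃ᵢ X)) (δ : ℝ) (x y : X) (T : ℝ) :
    Measure (D.Xbar × D.Xbar) :=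
  (ENNReal.ofReal (δ * Real.exp (-δ * T))) •
    Measure.sum (fun γ : Γ =>
      if dist x ((γ : X ≃ᵢ X) y) ≤ T then
        Measure.dirac (D.incl ((γ : X ≃ᵢ X) y), D.incl ((γ : X ≃ᵢ X).symm x))
      else 0)

/-- `(ξ₁, ξ₂, ξ₃, ξ₄)` is a quadrilateral. -/
def IsQuadrilateral (ξ₁ ξ₂ ξ₃ ξ₄ : D.bdry) : Prop :=
  (ξ₁, ξ₃) ∈ endpointsR D ∧ (ξ₁, ξ₄) ∈ endpointsR D ∧
  (ξ₂, ξ₃) ∈ endpointsR D ∧ (ξ₂, ξ₄) ∈ endpointsR D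

/-- The cross-ratio of a quadrilateral `(ξ, ξ', η, η')` with respect to the
basepoint `o`. -/
def crossRatio (o : X) (ξ ξ' η η' : D.bdry) : ℝ :=
  gromov D o ξ η + gromov D o ξ' η' - gromov D o ξ η' - gromov D o ξ' η

/-- A quasi-product geodesic current: a `Γ`-invariant Radon measure on
`∂_∞ℛ ⊆ ∂X × ∂X` absolutely continuous with respect to `(μ₋ ⊗ μ₊)|_{∂_∞ℛ}`. -/
def IsQuasiProductCurrent (Γ : Subgroup (X ≃ᵢ X)) (μm μp : Measure D.bdry)
    (μbar : Measure (D.bdry × D.bdry)) : Prop :=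
  (∀ γ : X ≃ᵢ X, γ ∈ Γ → ∀ E : Set (D.bdry × D.bdry), MeasurableSet E →
      μbar ((fun q : D.bdry × D.bdry => (D.act γ q.1, D.act γ q.2)) ⁻¹' E) = μbar E) ∧
  μbar ((endpointsR D)ᶜ) = 0 ∧
  μbar ≪ (μm.prod μp).restrict (endpointsR D) ∧
  (∀ K : Set (D.bdry × D.bdry), K ⊆ endpointsR D → IsCompact K → μbar K ≠ ⊤)

/-- The constant `Δ = sup_{R>0} ln(μbar(∂_∞ℬ(R)))/R` is finite, `o` being the
fixed basepoint. -/
def DeltaFinite (μbar : Measure (D.bdry × D.bdry)) (o : X) : Prop :=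
  ∃ Δ : ℝ, ∀ R : ℝ, 0 < R →
    μbar (ends D '' {v : GeodLine X | dist (v.1 0) o < R})
      ≤ ENNReal.ofReal (Real.exp (Δ * R))

/-- The orbit counting function `N_Γ(R) = #{γ ∈ Γ : d(x, γy) ≤ R}`. -/
def orbitCount (Γ : Subgroup (X ≃ᵢ X)) (x y : X) (R : ℝ) : ℕ :=
  Nat.card {γ : Γ // dist x ((γ : X ≃ᵢ X) y) ≤ R}

/-! ### Auxiliary lemmas for `endpoints_of_K_intersection` -/

section AuxEndpoints

variable {X : Type*} [MetricSpace X]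

lemma geodFlow_apply (t : ℝ) (v : GeodLine X) (s : ℝ) : (geodFlow t v).1 s = v.1 (s + t) := rfl

lemma smul_line_apply (γ : X ≃ᵢ X) (v : GeodLine X) (s : ℝ) : (γ • v).1 s = γ (v.1 s) := rfl

lemma line_dist (v : GeodLine X) (a b : ℝ) : dist (v.1 a) (v.1 b) = |a - b| := by
  rw [v.2.dist_eq, Real.dist_eq]

/-- The backward ray of a geodesic line. -/
def minusRay (v : GeodLine X) : Ray X :=
  ⟨fun t => v.1 (-t), fun s t _ _ => by
    rw [v.2.dist_eq, Real.dist_eq, show -s - -t = t - s by ring, abs_sub_comm]⟩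

/-- The forward ray of a geodesic line. -/
def plusRay (v : GeodLine X) : Ray X :=
  ⟨fun t => v.1 t, fun s t _ _ => by rw [v.2.dist_eq, Real.dist_eq]⟩

/-- The image of a ray under an isometry. -/
def mapRay (γ : X ≃ᵢ X) (σ : Ray X) : Ray X :=
  ⟨fun t => γ (σ.1 t), fun s t hs ht => by
    rw [γ.isometry.dist_eq]; exact σ.2 s t hs ht⟩

variable (D : BoundaryData X)

lemma lineMinus_def (v : GeodLine X) : lineMinus D v = D.endB (minusRay v) := rfl

lemma linePlus_def (v : GeodLine X) : linePlus D v = D.endB (plusRay v) := rfl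

lemma endB_congr {σ τ : Ray X} (h : RaysAsymptotic σ.1 τ.1) : D.endB σ = D.endB τ :=
  Subtype.ext ((D.endOfRay_eq_iff σ τ).2 h)

lemma raysAsymptotic_of_endB_eq {σ τ : Ray X} (h : D.endB σ = D.endB τ) :
    RaysAsymptotic σ.1 τ.1 :=
  (D.endOfRay_eq_iff σ τ).1 (congrArg Subtype.val h)

lemma lineMinus_geodFlow (c : ℝ) (v : GeodLine X) :
    lineMinus D (geodFlow c v) = lineMinus D v := by
  rw [lineMinus_def, lineMinus_def]
  apply endB_congr
  exact ⟨|c|, fun t _ => by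
    show dist (v.1 (-t + c)) (v.1 (-t)) ≤ |c|
    rw [line_dist]; simp⟩

lemma linePlus_geodFlow (c : ℝ) (v : GeodLine X) :
    linePlus D (geodFlow c v) = linePlus D v := by
  rw [linePlus_def, linePlus_def]
  apply endB_congr
  exact ⟨|c|, fun t _ => by
    show dist (v.1 (t + c)) (v.1 t) ≤ |c|
    rw [line_dist]; simp⟩

lemma ends_geodFlow (c : ℝ) (v : GeodLine X) : ends D (geodFlow c v) = ends D v := by
  unfold ends
  rw [lineMinus_geodFlow, linePlus_geodFlow]

/-- Busemann function along a geodesic line, computed at its own points. -/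
lemma busemann_self_line (v : GeodLine X) (a b : ℝ) :
    D.busemann (lineMinus D v).1 (v.1 a) (v.1 b) = a - b := by
  have hspec := D.busemann_spec (minusRay v) (v.1 a) (v.1 b)
  have h2 : Tendsto (fun s : ℝ => dist (v.1 a) ((minusRay v).1 s)
      - dist (v.1 b) ((minusRay v).1 s)) atTop (𝓝 (a - b)) := by
    apply Tendsto.congr' _ tendsto_const_nhds
    filter_upwards [eventually_ge_atTop (max (-a) (-b))] with s hs
    have ha : -a ≤ s := le_trans (le_max_left _ _) hs
    have hb : -b ≤ s := le_trans (le_max_right _ _) hs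
    show a - b = dist (v.1 a) (v.1 (-s)) - dist (v.1 b) (v.1 (-s))
    rw [line_dist, line_dist, abs_of_nonneg (by linarith), abs_of_nonneg (by linarith)]
    ring
  exact tendsto_nhds_unique hspec h2

/-- Cocycle property of the Busemann function based at the negative endpoint of a line. -/
lemma busemann_cocycle (v : GeodLine X) (a b c : X) :
    D.busemann (lineMinus D v).1 a c
      = D.busemann (lineMinus D v).1 a b + D.busemann (lineMinus D v).1 b c := by
  have h1 := D.busemann_spec (minusRay v) a c
  have h2 := (D.busemann_spec (minusRay v) a b).add (D.busemann_spec (minusRay v) b c)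
  have h2' : Tendsto (fun s : ℝ => dist a ((minusRay v).1 s) - dist c ((minusRay v).1 s)) atTop
      (𝓝 (D.busemann (lineMinus D v).1 a b + D.busemann (lineMinus D v).1 b c)) := by
    apply Tendsto.congr _ h2
    intro s; ring
  exact tendsto_nhds_unique h1 h2'

lemma busemann_other_line {u v : GeodLine X} (h : lineMinus D u = lineMinus D v) (a b : ℝ) :
    D.busemann (lineMinus D v).1 (u.1 a) (u.1 b) = a - b := by
  rw [← h]; exact busemann_self_line D u a b

/-- Equivariance of the Busemann function under isometries. -/
lemma busemann_mapRay (γ : X ≃ᵢ X) (σ : Ray X) (a b : X) :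
    D.busemann (D.endB (mapRay γ σ)).1 (γ a) (γ b) = D.busemann (D.endB σ).1 a b := by
  have h1 := D.busemann_spec (mapRay γ σ) (γ a) (γ b)
  have h2 : Tendsto (fun s : ℝ => dist (γ a) ((mapRay γ σ).1 s)
      - dist (γ b) ((mapRay γ σ).1 s)) atTop (𝓝 (D.busemann (D.endB σ).1 a b)) := by
    apply Tendsto.congr _ (D.busemann_spec σ a b)
    intro s
    show dist a (σ.1 s) - dist b (σ.1 s) = dist (γ a) (γ (σ.1 s)) - dist (γ b) (γ (σ.1 s))
    rw [γ.isometry.dist_eq, γ.isometry.dist_eq]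
  exact tendsto_nhds_unique h1 h2

lemma act_endB [Nonempty X] (γ : X ≃ᵢ X) (σ : Ray X) :
    D.act γ (D.endB σ) = D.endB (mapRay γ σ) := by
  unfold BoundaryData.act
  rw [dif_pos ‹Nonempty X›]
  apply endB_congr
  set ρ := (D.ray_exists (D.endB σ).1 (D.endB σ).2 (Nonempty.some ‹Nonempty X›)).choose with hρ
  have hρ2 := (D.ray_exists (D.endB σ).1 (D.endB σ).2 (Nonempty.some ‹Nonempty X›)).choose_spec
  have hend : D.endOfRay ρ = D.endOfRay σ := hρ2.2
  obtain ⟨C, hC⟩ := (D.endOfRay_eq_iff ρ σ).1 hend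
  exact ⟨C, fun t ht => by
    show dist (γ (ρ.1 t)) (γ (σ.1 t)) ≤ C
    rw [γ.isometry.dist_eq]; exact hC t ht⟩

lemma lineMinus_smul [Nonempty X] (γ : X ≃ᵢ X) (v : GeodLine X) :
    lineMinus D (γ • v) = D.act γ (lineMinus D v) := by
  rw [lineMinus_def, lineMinus_def, act_endB]
  exact endB_congr D ⟨0, fun t _ => by
    show dist (γ (v.1 (-t))) (γ (v.1 (-t))) ≤ 0
    simp⟩

lemma linePlus_smul [Nonempty X] (γ : X ≃ᵢ X) (v : GeodLine X) :
    linePlus D (γ • v) = D.act γ (linePlus D v) := by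
  rw [linePlus_def, linePlus_def, act_endB]
  exact endB_congr D ⟨0, fun t _ => by
    show dist (γ (v.1 t)) (γ (v.1 t)) ≤ 0
    simp⟩

lemma act_inv_act [Nonempty X] (γ : X ≃ᵢ X) (ξ : D.bdry) :
    D.act γ⁻¹ (D.act γ ξ) = ξ := by
  obtain ⟨σ, -, hσ⟩ := D.ray_exists ξ.1 ξ.2 (Nonempty.some ‹Nonempty X›)
  have hξ : D.endB σ = ξ := Subtype.ext hσ
  rw [← hξ, act_endB, act_endB]
  apply endB_congr
  exact ⟨0, fun t _ => by
    show dist (γ⁻¹ (γ (σ.1 t))) (σ.1 t) ≤ 0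
    simp⟩

/-- The set of normalized origins defining the width. -/
def Sset (v : GeodLine X) : Set X :=
  {p : X | ∃ u : GeodLine X,
    lineMinus D u = lineMinus D v ∧ linePlus D u = linePlus D v ∧
    D.busemann (lineMinus D v).1 (u.1 0) (v.1 0) = 0 ∧ u.1 0 = p}

lemma width_eq_diam (v : GeodLine X) : width D v = EMetric.diam (Sset D v) := rfl

lemma self_mem_Sset (v : GeodLine X) : v.1 0 ∈ Sset D v :=
  ⟨v, rfl, rfl, by simpa using busemann_self_line D v 0 0, rfl⟩

lemma eq_origin_of_width_zero {v : GeodLine X} (h : width D v = 0) {p : X}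
    (hp : p ∈ Sset D v) : p = v.1 0 := by
  have h1 : edist p (v.1 0) ≤ width D v := EMetric.edist_le_diam_of_mem hp (self_mem_Sset D v)
  rw [h] at h1
  exact edist_eq_zero.1 (le_antisymm h1 (zero_le))

/-! CAT(0) convexity facts. -/

/-- Distance from a point to a geodesic line is quasiconvex along the line. -/
lemma dist_line_le_max (hHad : IsHadamard X) (u : GeodLine X) (z : X) {p m q : ℝ}
    (hpm : p ≤ m) (hmq : m ≤ q) :
    dist z (u.1 m) ≤ max (dist z (u.1 p)) (dist z (u.1 q)) := by
  rcases eq_or_lt_of_le (hpm.trans hmq) with hpq | hpq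
  · have : m = p := le_antisymm (hpq ▸ hmq) hpm
    rw [this]; exact le_max_left _ _
  · set L := q - p with hL
    have hL0 : 0 < L := by simp [hL]; linarith
    set σ : ℝ → X := fun s => u.1 (p + s) with hσ
    have hxy : dist (u.1 p) (u.1 q) = L := by
      rw [line_dist, abs_of_nonpos (by linarith), hL]; ring
    set t : ℝ := (m - p) / L with htdef
    have ht : t ∈ Icc (0:ℝ) 1 := by
      constructor
      · exact div_nonneg (by linarith) hL0.le
      · rw [div_le_one hL0]; linarith
    have key := hHad.cat0 (u.1 p) (u.1 q) z σ (by simp [hσ])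
      (by rw [hxy]; show u.1 (p + L) = u.1 q; congr 1; rw [hL]; ring)
      (fun a _ b _ => by
        show dist (u.1 (p + a)) (u.1 (p + b)) = |a - b|
        rw [line_dist]; congr 1; ring) t ht
    rw [hxy] at key
    have hσt : σ (t * L) = u.1 m := by
      show u.1 (p + (m - p) / L * L) = u.1 m
      congr 1
      field_simp
      ring
    rw [hσt] at key
    set M := max (dist z (u.1 p)) (dist z (u.1 q)) with hM
    have hM0 : 0 ≤ M := le_trans dist_nonneg (le_max_left _ _)
    have h1 : dist z (u.1 p) ≤ M := le_max_left _ _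
    have h2 : dist z (u.1 q) ≤ M := le_max_right _ _
    obtain ⟨ht0, ht1⟩ := ht
    have hsq : dist z (u.1 m) ^ 2 ≤ M ^ 2 := by
      have e1 : dist z (u.1 p) ^ 2 ≤ M ^ 2 := pow_le_pow_left₀ dist_nonneg h1 2
      have e2 : dist z (u.1 q) ^ 2 ≤ M ^ 2 := pow_le_pow_left₀ dist_nonneg h2 2
      have e3 : 0 ≤ t * (1 - t) * L ^ 2 :=
        mul_nonneg (mul_nonneg ht0 (by linarith)) (sq_nonneg L)
      have f1 := mul_le_mul_of_nonneg_left e1 (by linarith : (0:ℝ) ≤ 1 - t)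
      have f2 := mul_le_mul_of_nonneg_left e2 ht0
      linarith [key, f1, f2, e3]
    calc dist z (u.1 m) = Real.sqrt (dist z (u.1 m) ^ 2) := (Real.sqrt_sq dist_nonneg).symm
      _ ≤ Real.sqrt (M ^ 2) := Real.sqrt_le_sqrt hsq
      _ = M := Real.sqrt_sq hM0

/-- Convexity of the distance between two geodesics issued from the same point. -/
lemma cat0_convex (hHad : IsHadamard X) {σ τ : ℝ → X} (hσ : IsRay σ) (hτ : IsRay τ)
    (h0 : σ 0 = τ 0) {s t : ℝ} (hs : 0 < s) (ht : t ∈ Icc (0:ℝ) 1) :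
    dist (σ (t * s)) (τ (t * s)) ≤ t * dist (σ s) (τ s) := by
  have hdτ : dist (τ 0) (τ s) = s := by
    rw [hτ 0 s le_rfl hs.le, zero_sub, abs_neg, abs_of_nonneg hs.le]
  have hdσ : dist (σ 0) (σ s) = s := by
    rw [hσ 0 s le_rfl hs.le, zero_sub, abs_neg, abs_of_nonneg hs.le]
  have key1 := hHad.cat0 (τ 0) (τ s) (σ (t * s)) τ rfl (by rw [hdτ])
    (fun a ha b hb => by rw [hdτ] at ha hb; exact hτ a b ha.1 hb.1) t ht
  have key2 := hHad.cat0 (σ 0) (σ s) (τ s) σ rfl (by rw [hdσ])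
    (fun a ha b hb => by rw [hdσ] at ha hb; exact hσ a b ha.1 hb.1) t ht
  rw [hdτ] at key1
  rw [hdσ] at key2
  have hts : 0 ≤ t * s := mul_nonneg ht.1 hs.le
  have e1 : dist (σ (t * s)) (τ 0) = t * s := by
    rw [← h0, hσ (t * s) 0 hts le_rfl, sub_zero, abs_of_nonneg hts]
  have e2 : dist (τ s) (σ 0) = s := by
    rw [h0, hτ s 0 hs.le le_rfl, sub_zero, abs_of_nonneg hs.le]
  rw [e1] at key1
  rw [e2] at key2
  have e3 : dist (σ (t * s)) (τ s) = dist (τ s) (σ (t * s)) := dist_comm _ _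
  rw [e3] at key1
  have hsq : dist (σ (t * s)) (τ (t * s)) ^ 2 ≤ (t * dist (σ s) (τ s)) ^ 2 := by
    have hmul := mul_le_mul_of_nonneg_left key2 ht.1
    have e4 : dist (τ s) (σ s) = dist (σ s) (τ s) := dist_comm _ _
    rw [e4] at hmul
    nlinarith [hmul, key1]
  have htf : 0 ≤ t * dist (σ s) (τ s) := mul_nonneg ht.1 dist_nonneg
  calc dist (σ (t * s)) (τ (t * s))
      = Real.sqrt (dist (σ (t * s)) (τ (t * s)) ^ 2) := (Real.sqrt_sq dist_nonneg).symm
    _ ≤ Real.sqrt ((t * dist (σ s) (τ s)) ^ 2) := Real.sqrt_le_sqrt hsq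
    _ = t * dist (σ s) (τ s) := Real.sqrt_sq htf

/-- Uniqueness of rays: asymptotic rays from the same point coincide. -/
lemma ray_unique (hHad : IsHadamard X) {σ τ : ℝ → X} (hσ : IsRay σ) (hτ : IsRay τ)
    (h0 : σ 0 = τ 0) (hA : RaysAsymptotic σ τ) {a : ℝ} (ha : 0 ≤ a) : σ a = τ a := by
  rcases eq_or_lt_of_le ha with rfl | ha'
  · exact h0
  obtain ⟨C, hC⟩ := hA
  have hC0 : 0 ≤ C := le_trans dist_nonneg (hC 0 le_rfl)
  have hbound : ∀ s : ℝ, a ≤ s → dist (σ a) (τ a) ≤ a * C * s⁻¹ := by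
    intro s hsa
    have hs0 : 0 < s := lt_of_lt_of_le ha' hsa
    have hts : a / s * s = a := div_mul_cancel₀ a hs0.ne'
    have ht : a / s ∈ Icc (0:ℝ) 1 := ⟨div_nonneg ha hs0.le, (div_le_one hs0).2 hsa⟩
    have h1 := cat0_convex hHad hσ hτ h0 hs0 ht
    rw [hts] at h1
    refine h1.trans ?_
    have := mul_le_mul_of_nonneg_left (hC s hs0.le) (div_nonneg ha hs0.le)
    refine this.trans (le_of_eq ?_)
    field_simp
  have htend : Tendsto (fun s : ℝ => a * C * s⁻¹) atTop (𝓝 0) := by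
    have := tendsto_inv_atTop_zero.const_mul (a * C)
    simpa using this
  have hle : dist (σ a) (τ a) ≤ 0 := by
    refine ge_of_tendsto htend ?_
    filter_upwards [eventually_ge_atTop a] with s hs using hbound s hs
  exact dist_le_zero.1 hle

/-- Rigidity: all lines with the same endpoints as a zero-width line coincide
with it up to a shift of parameter. -/
lemma line_eq_of_width_zero (hHad : IsHadamard X) {u u' : GeodLine X}
    (hw : width D u = 0) (hm : lineMinus D u' = lineMinus D u)
    (hp : linePlus D u' = linePlus D u) :
    ∃ c : ℝ, ∀ t : ℝ, u'.1 (t + c) = u.1 t := by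
  set c : ℝ := -(D.busemann (lineMinus D u).1 (u'.1 0) (u.1 0)) with hc
  refine ⟨c, fun t => ?_⟩
  have hshiftm : lineMinus D (geodFlow c u') = lineMinus D u := by
    rw [lineMinus_geodFlow]; exact hm
  have hshiftp : linePlus D (geodFlow c u') = linePlus D u := by
    rw [linePlus_geodFlow]; exact hp
  have hbus : D.busemann (lineMinus D u).1 ((geodFlow c u').1 0) (u.1 0) = 0 := by
    have hco := busemann_cocycle D u ((geodFlow c u').1 0) (u'.1 0) (u.1 0)
    have h1 : D.busemann (lineMinus D u).1 ((geodFlow c u').1 0) (u'.1 0) = c := by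
      have := busemann_other_line D hm c 0
      simpa [geodFlow_apply, zero_add] using this
    rw [hco, h1, hc]; ring
  have h00 : (geodFlow c u').1 0 = u.1 0 :=
    eq_origin_of_width_zero D hw ⟨geodFlow c u', hshiftm, hshiftp, hbus, rfl⟩
  have h0' : u'.1 (0 + c) = u.1 0 := h00
  -- forward rays
  have hfwd : ∀ b : ℝ, 0 ≤ b → u'.1 (b + c) = u.1 b := by
    intro b hb
    have hray1 : IsRay (fun s => u'.1 (s + c)) := fun p q _ _ => by
      rw [line_dist]; congr 1; ring
    have hray2 : IsRay (fun s => u.1 s) := fun p q _ _ => by rw [line_dist]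
    have hasymp : RaysAsymptotic (fun s => u'.1 (s + c)) (fun s => u.1 s) := by
      have hend : D.endB (plusRay (geodFlow c u')) = D.endB (plusRay u) := by
        rw [← linePlus_def, ← linePlus_def]; exact hshiftp
      exact raysAsymptotic_of_endB_eq D hend
    have h0'' : (fun s => u'.1 (s + c)) 0 = (fun s => u.1 s) 0 := by
      simpa using h0'
    exact ray_unique hHad hray1 hray2 h0'' hasymp hb
  rcases le_or_gt 0 t with hb | hb
  · exact hfwd t hb
  · -- backward rays
    have hray1 : IsRay (fun s => u'.1 (-s + c)) := fun p q _ _ => by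
      rw [line_dist, show -p + c - (-q + c) = q - p by ring, abs_sub_comm]
    have hray2 : IsRay (fun s => u.1 (-s)) := fun p q _ _ => by
      rw [line_dist, show -p - -q = q - p by ring, abs_sub_comm]
    have hasymp : RaysAsymptotic (fun s => u'.1 (-s + c)) (fun s => u.1 (-s)) := by
      have hend : D.endB (minusRay (geodFlow c u')) = D.endB (minusRay u) := by
        rw [← lineMinus_def, ← lineMinus_def]; exact hshiftm
      exact raysAsymptotic_of_endB_eq D hend
    have h0'' : (fun s => u'.1 (-s + c)) 0 = (fun s => u.1 (-s)) 0 := by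
      simpa using h0'
    have := ray_unique hHad hray1 hray2 h0'' hasymp (a := -t) (by linarith)
    simpa [neg_neg] using this

/-- Zero width only depends on the pair of endpoints. -/
lemma width_zero_congr (hHad : IsHadamard X) {u u₂ : GeodLine X} (hw : width D u = 0)
    (hm : lineMinus D u₂ = lineMinus D u) (hp : linePlus D u₂ = linePlus D u) :
    width D u₂ = 0 := by
  rw [width_eq_diam]
  apply EMetric.diam_subsingleton
  have key : ∀ p ∈ Sset D u₂, p = u₂.1 0 := by
    rintro p ⟨w, hwm, hwp, hwb, rfl⟩
    obtain ⟨c, hc⟩ := line_eq_of_width_zero D hHad hw (hwm.trans hm) (hwp.trans hp)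
    obtain ⟨d, hd⟩ := line_eq_of_width_zero D hHad hw hm hp
    have hw0 : w.1 0 = u.1 (-c) := by
      have := hc (-c); rw [show -c + c = 0 by ring] at this; exact this
    have hu20 : u₂.1 0 = u.1 (-d) := by
      have := hd (-d); rw [show -d + d = 0 by ring] at this; exact this
    have hbus : D.busemann (lineMinus D u).1 (u.1 (-c)) (u.1 (-d)) = 0 := by
      rw [← hw0, ← hu20, ← hm]; exact hwb
    rw [busemann_self_line D u (-c) (-d)] at hbus
    have hcd : c = d := by linarith
    rw [hw0, hu20, hcd]
  intro p hp' q hq'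
  rw [key p hp', key q hq']

/-- Zero width is preserved by the isometry action. -/
lemma width_smul_zero [Nonempty X] {v : GeodLine X} (γ : X ≃ᵢ X)
    (hw : width D v = 0) : width D (γ • v) = 0 := by
  rw [width_eq_diam]
  apply EMetric.diam_subsingleton
  have key : ∀ p ∈ Sset D (γ • v), p = γ (v.1 0) := by
    rintro p ⟨u', hm, hp, hb, rfl⟩
    set w : GeodLine X := γ⁻¹ • u' with hwdef
    have hu' : u' = γ • w := by rw [hwdef, smul_inv_smul]
    have hwm : lineMinus D w = lineMinus D v := by
      rw [hwdef, lineMinus_smul]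
      rw [lineMinus_smul] at hm
      rw [hm, ← lineMinus_smul, ← lineMinus_smul]
      have : γ⁻¹ • γ • v = v := inv_smul_smul γ v
      rw [this]
    have hwp : linePlus D w = linePlus D v := by
      rw [hwdef, linePlus_smul]
      rw [linePlus_smul] at hp
      rw [hp, ← linePlus_smul, ← linePlus_smul]
      have : γ⁻¹ • γ • v = v := inv_smul_smul γ v
      rw [this]
    have hbw : D.busemann (lineMinus D v).1 (w.1 0) (v.1 0) = 0 := by
      have hmap := busemann_mapRay D γ (minusRay v) (w.1 0) (v.1 0)
      have hkey : D.endB (mapRay γ (minusRay v)) = lineMinus D (γ • v) := by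
        rw [lineMinus_def]
        exact endB_congr D ⟨0, fun t _ => by
          show dist (γ (v.1 (-t))) (γ (v.1 (-t))) ≤ 0; simp⟩
      rw [hkey, ← lineMinus_def] at hmap
      rw [← hmap]
      have hγw : γ (w.1 0) = u'.1 0 := by
        rw [hu']; rfl
      rw [hγw]
      exact hb
    have : w.1 0 = v.1 0 := eq_origin_of_width_zero D hw ⟨w, hwm, hwp, hbw, rfl⟩
    have hfin : u'.1 0 = γ (w.1 0) := by rw [hu']; rfl
    rw [hfin, this]
  intro p hp' q hq'
  rw [key p hp', key q hq']

lemma mem_joinSet_self (u : GeodLine X) (t : ℝ) :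
    u.1 t ∈ joinSet D (lineMinus D u) (linePlus D u) := ⟨u, t, rfl, rfl, rfl⟩

lemma joinSet_eq_range (hHad : IsHadamard X) {u : GeodLine X} (hw : width D u = 0) :
    joinSet D (lineMinus D u) (linePlus D u) = Set.range u.1 := by
  ext p
  constructor
  · rintro ⟨v, t, hm, hp, rfl⟩
    obtain ⟨c, hc⟩ := line_eq_of_width_zero D hHad hw hm hp
    refine ⟨t - c, ?_⟩
    have := hc (t - c)
    rw [show t - c + c = t by ring] at this
    exact this.symm
  · rintro ⟨t, rfl⟩
    exact mem_joinSet_self D u t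

/-- Equivariance of joining sets under isometries. -/
lemma joinSet_smul [Nonempty X] (γ : X ≃ᵢ X) (u : GeodLine X) :
    joinSet D (lineMinus D (γ • u)) (linePlus D (γ • u))
      = γ '' joinSet D (lineMinus D u) (linePlus D u) := by
  ext p
  constructor
  · rintro ⟨v, t, hm, hp, rfl⟩
    refine ⟨(γ⁻¹ • v).1 t, ⟨γ⁻¹ • v, t, ?_, ?_, rfl⟩, ?_⟩
    · rw [lineMinus_smul, hm, lineMinus_smul, act_inv_act]
    · rw [linePlus_smul, hp, linePlus_smul, act_inv_act]
    · show γ (γ⁻¹ (v.1 t)) = v.1 t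
      simp
  · rintro ⟨p', ⟨v, t, hm, hp, rfl⟩, rfl⟩
    exact ⟨γ • v, t, by rw [lineMinus_smul, lineMinus_smul, hm],
      by rw [linePlus_smul, linePlus_smul, hp], rfl⟩

/-- Existence of a closest point on a geodesic line. -/
lemma exists_min_dist_line (u : GeodLine X) (z : X) :
    ∃ t₀ : ℝ, ∀ t : ℝ, dist z (u.1 t₀) ≤ dist z (u.1 t) := by
  set g : ℝ → ℝ := fun t => dist z (u.1 t) with hg
  have hgc : Continuous g := continuous_const.dist (map_continuous u.1)
  set R : ℝ := g 0 with hR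
  have hR0 : 0 ≤ R := dist_nonneg
  have hIcc : IsCompact (Icc (-(2*R+1)) (2*R+1)) := isCompact_Icc
  obtain ⟨t₀, ht₀, hmin⟩ := hIcc.exists_isMinOn ⟨0, by
    constructor <;> linarith⟩ hgc.continuousOn
  refine ⟨t₀, fun t => ?_⟩
  rcases le_or_gt (|t|) (2*R+1) with hta | hta
  · have habs := abs_le.1 hta
    exact hmin ⟨habs.1, habs.2⟩
  · have hlow : |t| - R ≤ g t := by
      have htr : |t| = dist (u.1 0) (u.1 t) := by rw [line_dist, zero_sub, abs_neg]
      have := dist_triangle (u.1 0) z (u.1 t)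
      rw [← htr] at this
      have hzc : dist (u.1 0) z = R := by rw [dist_comm]
      rw [hzc] at this
      linarith
    have h1 : g t₀ ≤ g 0 := hmin (⟨by linarith, by linarith⟩ : (0:ℝ) ∈ Icc (-(2*R+1)) (2*R+1))
    have : g 0 ≤ g t := by
      change R ≤ g t
      linarith
    linarith

lemma infDist_range_eq (u : GeodLine X) (z : X) {t₀ : ℝ}
    (hmin : ∀ t : ℝ, dist z (u.1 t₀) ≤ dist z (u.1 t)) :
    Metric.infDist z (Set.range u.1) = dist z (u.1 t₀) := by
  refine le_antisymm (Metric.infDist_le_dist_of_mem ⟨t₀, rfl⟩) ?_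
  by_contra h
  push_neg at h
  obtain ⟨p, ⟨t, rfl⟩, hlt⟩ := (Metric.infDist_lt_iff (Set.range_nonempty u.1)).1 h
  exact absurd hlt (not_lt.2 (hmin t))

end AuxEndpoints

/-- For `d(x,γy) ≥ 3r`, the endpoint map identifies
`⋃_{t>0} (K⁺ ∩ g^{-t} γ K⁻)` with `L_r(x,γy) ∩ ∂_∞𝒵 ∩ (γB × A)`. -/
theorem endpoints_of_K_intersection
    {X : Type*} [MetricSpace X] [ProperSpace X]
    (hHad : IsHadamard X) (D : BoundaryData X)
    (r : ℝ) (hr : 0 < r) (x y : X) (A B : Set D.bdry)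
    (γ : X ≃ᵢ X) (hd : 3 * r ≤ dist x (γ y)) :
    ends D '' (⋃ t ∈ Set.Ioi (0:ℝ),
        (KsetPlus D r x A ∩ geodFlow t ⁻¹' ((fun w => γ • w) '' KsetMinus D r y B)))
      = corridor D r x (γ y) ∩ endpointsZ D ∩ ((D.act γ '' B) ×ˢ A) := by
  have hX : Nonempty X := ⟨x⟩
  apply Set.eq_of_subset_of_subset
  · -- forward inclusion
    rintro q ⟨v, hv, rfl⟩
    rw [Set.mem_iUnion₂] at hv
    obtain ⟨t, ht, hvK, hvpre⟩ := hv
    obtain ⟨⟨hw0, hinf, s, hs, hds⟩, hA⟩ := hvK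
    obtain ⟨w, hwmem, hγw⟩ := hvpre
    obtain ⟨⟨hw0', hinf', s', hs', hds'⟩, hB⟩ := hwmem
    have habs_s := abs_lt.1 hs
    have habs_s' := abs_lt.1 hs'
    have hdist1 : dist x (v.1 (-s)) < r := by rw [hds]; exact hinf
    have hvts' : v.1 (t - s') = γ (w.1 (-s')) := by
      have h1 := congrArg (fun z : GeodLine X => z.1 (-s')) hγw
      simp only [smul_line_apply, geodFlow_apply] at h1
      rw [h1]
      congr 1
      ring
    have hdist2 : dist (v.1 (t - s')) (γ y) < r := by
      rw [hvts', γ.dist_eq, dist_comm, hds']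
      exact hinf'
    have htri := dist_triangle4 x (v.1 (-s)) (v.1 (t - s')) (γ y)
    rw [line_dist] at htri
    have hfar : r < |(-s) - (t - s')| := by linarith
    have hT : 0 < t - s' + s := by
      by_contra hcon
      push_neg at hcon
      rw [show (-s) - (t - s') = -(t - s' + s) by ring, abs_neg, abs_of_nonpos hcon] at hfar
      have : 0 < t := ht
      linarith
    refine ⟨⟨⟨geodFlow (-s) v, t - s' + s, ends_geodFlow D (-s) v, hT, ?_, ?_⟩,
      ⟨v, hw0, rfl⟩⟩, ?_, hA⟩
    · have h2 : (geodFlow (-s) v).1 0 = v.1 (-s) := by rw [geodFlow_apply, zero_add]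
      rw [Metric.mem_ball, h2, dist_comm]
      exact hdist1
    · have h2 : (geodFlow (-s) v).1 (t - s' + s) = v.1 (t - s') := by
        rw [geodFlow_apply]; congr 1; ring
      rw [Metric.mem_ball, h2]
      exact hdist2
    · have h1 : lineMinus D v = D.act γ (lineMinus D w) := by
        rw [← lineMinus_geodFlow D t v, ← hγw, lineMinus_smul]
      exact ⟨lineMinus D w, hB, h1.symm⟩
  · -- reverse inclusion
    rintro q ⟨⟨hcor, hZ⟩, hprod⟩
    obtain ⟨u, hwu, hends⟩ := hZ
    subst hends
    obtain ⟨hq1, hq2⟩ := hprod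
    obtain ⟨v', t', hv'ends, ht', hv'0, hv't⟩ := hcor
    have hv'm : lineMinus D v' = lineMinus D u := congrArg Prod.fst hv'ends
    have hv'p : linePlus D v' = linePlus D u := congrArg Prod.snd hv'ends
    obtain ⟨c, hc⟩ := line_eq_of_width_zero D hHad hwu hv'm hv'p
    have hua : v'.1 0 = u.1 (-c) := by
      have h1 := hc (-c); rw [show -c + c = 0 by ring] at h1; exact h1
    have hub : v'.1 t' = u.1 (t' - c) := by
      have h1 := hc (t' - c); rw [show t' - c + c = t' by ring] at h1; exact h1
    have ga : dist x (u.1 (-c)) < r := by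
      rw [← hua, dist_comm]; exact Metric.mem_ball.1 hv'0
    have gb : dist (γ y) (u.1 (t' - c)) < r := by
      rw [← hub, dist_comm]; exact Metric.mem_ball.1 hv't
    obtain ⟨t₁, h1min⟩ := exists_min_dist_line u x
    obtain ⟨t₂, h2min⟩ := exists_min_dist_line u (γ y)
    have hg1 : dist x (u.1 t₁) < r := lt_of_le_of_lt (h1min (-c)) ga
    have hg2 : dist (γ y) (u.1 t₂) < r := lt_of_le_of_lt (h2min (t' - c)) gb
    have hjoin : joinSet D (lineMinus D u) (linePlus D u) = Set.range u.1 :=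
      joinSet_eq_range D hHad hwu
    have hinfx : Metric.infDist x (Set.range u.1) = dist x (u.1 t₁) :=
      infDist_range_eq u x h1min
    have hinfy : Metric.infDist (γ y) (Set.range u.1) = dist (γ y) (u.1 t₂) :=
      infDist_range_eq u (γ y) h2min
    have hab : -c < t' - c := by linarith
    have hsep : r < t₂ - t₁ := by
      have hfar : r < |t₁ - t₂| := by
        have htri := dist_triangle4 x (u.1 t₁) (u.1 t₂) (γ y)
        rw [line_dist, dist_comm (u.1 t₂) (γ y)] at htri
        linarith
      have hlt : t₁ < t₂ := by
        by_contra hcon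
        push_neg at hcon
        rcases le_or_gt t₁ (t' - c) with hcase | hcase
        · have h2rh : 2 * r < dist (γ y) (u.1 t₁) := by
            have h3 := dist_triangle x (u.1 t₁) (γ y)
            rw [dist_comm (u.1 t₁) (γ y)] at h3
            linarith
          have hmaxle := dist_line_le_max hHad u (γ y) hcon hcase
          have hmax : max (dist (γ y) (u.1 t₂)) (dist (γ y) (u.1 (t' - c))) < r :=
            max_lt hg2 gb
          linarith
        · rcases le_or_gt (-c) t₂ with hcase2 | hcase2
          · have h2rg : 2 * r < dist x (u.1 t₂) := by
              have h3 := dist_triangle x (u.1 t₂) (γ y)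
              rw [dist_comm (u.1 t₂) (γ y)] at h3
              linarith
            have hmaxle := dist_line_le_max hHad u x hcase2 hcon
            have hmax : max (dist x (u.1 (-c))) (dist x (u.1 t₁)) < r := max_lt ga hg1
            linarith
          · have h2rha : 2 * r < dist (γ y) (u.1 (-c)) := by
              have h3 := dist_triangle x (u.1 (-c)) (γ y)
              rw [dist_comm (u.1 (-c)) (γ y)] at h3
              linarith
            have hmaxle := dist_line_le_max hHad u (γ y) hcase2.le hab.le
            have hmax : max (dist (γ y) (u.1 t₂)) (dist (γ y) (u.1 (t' - c))) < r :=
              max_lt hg2 gb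
            linarith
      rw [abs_sub_comm, abs_of_nonneg (by linarith : (0:ℝ) ≤ t₂ - t₁)] at hfar
      exact hfar
    have hwidth2 : width D (geodFlow t₂ u) = 0 :=
      width_zero_congr D hHad hwu (lineMinus_geodFlow D t₂ u) (linePlus_geodFlow D t₂ u)
    have hTw : geodFlow (t₂ - t₁) (geodFlow t₁ u) = geodFlow t₂ u := by
      apply Subtype.ext
      apply ContinuousMap.ext
      intro s2
      show u.1 (s2 + (t₂ - t₁) + t₁) = u.1 (s2 + t₂)
      congr 1
      ring
    have hγw' : γ • ((γ⁻¹ : X ≃ᵢ X) • geodFlow t₂ u) = geodFlow t₂ u := smul_inv_smul γ _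
    have hjs : joinSet D (lineMinus D ((γ⁻¹ : X ≃ᵢ X) • geodFlow t₂ u))
        (linePlus D ((γ⁻¹ : X ≃ᵢ X) • geodFlow t₂ u)) = (γ⁻¹ : X ≃ᵢ X) '' Set.range u.1 := by
      rw [joinSet_smul D γ⁻¹ (geodFlow t₂ u), lineMinus_geodFlow, linePlus_geodFlow, hjoin]
    have hyeq : (γ⁻¹ : X ≃ᵢ X) (γ y) = y := by simp
    have hiy : Metric.infDist y ((γ⁻¹ : X ≃ᵢ X) '' Set.range u.1) = dist (γ y) (u.1 t₂) := by
      rw [← hyeq, Metric.infDist_image (γ⁻¹ : X ≃ᵢ X).isometry]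
      rw [hyeq]
      exact hinfy
    refine ⟨geodFlow t₁ u, ?_, ends_geodFlow D t₁ u⟩
    rw [Set.mem_iUnion₂]
    refine ⟨t₂ - t₁, by simpa using (by linarith : (0:ℝ) < t₂ - t₁), ⟨?_, ?_⟩⟩
    · -- membership in KsetPlus
      refine ⟨⟨?_, ?_, 0, by simpa using by linarith, ?_⟩, ?_⟩
      · exact width_zero_congr D hHad hwu (lineMinus_geodFlow D t₁ u) (linePlus_geodFlow D t₁ u)
      · rw [lineMinus_geodFlow, linePlus_geodFlow, hjoin, hinfx]
        exact hg1
      · rw [lineMinus_geodFlow, linePlus_geodFlow, hjoin, hinfx, neg_zero]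
        show dist x (u.1 (0 + t₁)) = dist x (u.1 t₁)
        rw [zero_add]
      · rw [linePlus_geodFlow]
        exact hq2
    · -- membership in the preimage
      show geodFlow (t₂ - t₁) (geodFlow t₁ u) ∈ (fun w => γ • w) '' KsetMinus D r y B
      rw [hTw]
      refine ⟨(γ⁻¹ : X ≃ᵢ X) • geodFlow t₂ u, ?_, hγw'⟩
      refine ⟨⟨?_, ?_, 0, by simpa using by linarith, ?_⟩, ?_⟩
      · exact width_smul_zero D γ⁻¹ hwidth2
      · rw [hjs, hiy]
        exact hg2
      · rw [hjs, hiy, neg_zero]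
        show dist y ((γ⁻¹ : X ≃ᵢ X) (u.1 (0 + t₂))) = dist (γ y) (u.1 t₂)
        rw [zero_add, ← hyeq, (γ⁻¹ : X ≃ᵢ X).dist_eq, hyeq]
      · obtain ⟨β, hβB, hβ⟩ := hq1
        have hβ' : D.act γ β = lineMinus D u := hβ
        rw [lineMinus_smul, lineMinus_geodFlow, ← hβ', act_inv_act]
        exact hβB
end RicksBM
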